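/- Let d = 1 and P = 0. Let (u_ε, m_ε, H̄_ε(0)) ∈ C^∞(𝕋)×C^∞(𝕋)×ℝ, with m_ε > 0, solve the one-dimensional system: (1/2)(u_ε'(x))² + V(x, x/ε) = ln m_ε(x) + H̄_ε(0) and −(m_ε(x) u_ε'(x))' = 0 in 𝕋, with ∫_0^1 u_ε dx = 0 and ∫_0^1 m_ε dx = 1, and set j_ε = m_ε u_ε'. Then for all x ∈ 𝕋: u_ε(x) = 0, m_ε(x) = e^{V(x,x/ε) − H̄_ε(0)}, H̄_ε(0) = ln ∫_0^1 e^{V(x,x/ε)} dx, and j_ε = 0. Moreover, H̄_ε(0) → H̄(0) := ln ∫_0^1∫_0^1 e^{V(x,y)} dy dx, and m_ε strongly two-scale converges in L^p(𝕋×𝒴) for every p ∈ (1,∞) to m(x,y) = e^{V(x,y) − H̄(0)}. -/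

import Mathlib

open MeasureTheory Filter Topology Function intervalIntegral

noncomputable section

/-- Weak two-scale convergence on the one-dimensional torus `𝕋` with cell `𝒴 = [0,1)`. -/
def TwoScaleW1 (ε : ℕ → ℝ) (w : ℕ → ℝ → ℝ) (W : ℝ → ℝ → ℝ) : Prop :=
  ∀ ψ : ℝ → ℝ → ℝ, ContDiff ℝ (⊤ : ℕ∞) (uncurry ψ) →
    (∀ x y, ψ (x + 1) y = ψ x y) → (∀ x y, ψ x (y + 1) = ψ x y) →
    Tendsto (fun n => ∫ x in (0:ℝ)..1, w n x * ψ x (x / ε n)) atTop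
      (𝓝 (∫ x in (0:ℝ)..1, ∫ y in (0:ℝ)..1, W x y * ψ x y))

/-- Strong two-scale convergence in `L^p(𝕋 × 𝒴)`: weak two-scale convergence together
with convergence of the `L^p` norms. -/
def TwoScaleS1 (ε : ℕ → ℝ) (p : ℝ) (w : ℕ → ℝ → ℝ) (W : ℝ → ℝ → ℝ) : Prop :=
  TwoScaleW1 ε w W ∧
    Tendsto (fun n => (∫ x in (0:ℝ)..1, |w n x| ^ p) ^ (1 / p)) atTop
      (𝓝 ((∫ x in (0:ℝ)..1, ∫ y in (0:ℝ)..1, |W x y| ^ p) ^ (1 / p)))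

/-- `V : 𝕋 × ℝ → ℝ` smooth, `1`-periodic in each variable. -/
def SmoothV1 (V : ℝ → ℝ → ℝ) : Prop :=
  ContDiff ℝ (⊤ : ℕ∞) (uncurry V) ∧ (∀ x y, V (x + 1) y = V x y) ∧ (∀ x y, V x (y + 1) = V x y)

/-- `(u, m, H)` is a smooth, positive, normalized solution of the one-dimensional
oscillating MFG system: `(P+u')²/2 + V(x,x/ε) = ln m + H`, `(m (P+u'))' = 0`,
`∫_0^1 u = 0`, `∫_0^1 m = 1`. -/
def Solves1D (V : ℝ → ℝ → ℝ) (P ε : ℝ) (u m : ℝ → ℝ) (H : ℝ) : Prop :=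
  ContDiff ℝ (⊤ : ℕ∞) u ∧ Function.Periodic u 1 ∧ ContDiff ℝ (⊤ : ℕ∞) m ∧ Function.Periodic m 1 ∧
  (∀ x, 0 < m x) ∧
  (∀ x, (P + deriv u x) ^ 2 / 2 + V x (x / ε) = Real.log (m x) + H) ∧
  (∀ x, deriv (fun z => m z * (P + deriv u z)) x = 0) ∧
  (∫ x in (0:ℝ)..1, u x) = 0 ∧ (∫ x in (0:ℝ)..1, m x) = 1

section osc

variable {f : ℝ → ℝ → ℝ}

lemma osc_cont (hf : Continuous (uncurry f)) :
    Continuous fun x => ∫ y in (0:ℝ)..1, f x y :=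
  continuous_parametric_intervalIntegral_of_continuous' hf 0 1

lemma osc_red (hpx : ∀ x y, f (x + 1) y = f x y) (hpy : ∀ x y, f x (y + 1) = f x y)
    (x y : ℝ) : f x y = f (Int.fract x) (Int.fract y) := by
  have h1 : Periodic (f x) 1 := fun t => hpy x t
  have h2 : Periodic (fun z => f z (Int.fract y)) 1 := fun t => hpx t _
  have e1 : f x (Int.fract y) = f x y := by
    have := h1.sub_int_mul_eq (x := y) ⌊y⌋
    rw [mul_one, Int.self_sub_floor] at this
    exact this
  have e2 : f (Int.fract x) (Int.fract y) = f x (Int.fract y) := by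
    have := h2.sub_int_mul_eq (x := x) ⌊x⌋
    rw [mul_one, Int.self_sub_floor] at this
    exact this
  rw [e2, e1]

lemma osc_key (hf : ContDiff ℝ (⊤ : ℕ∞) (uncurry f))
    (hpx : ∀ x y, f (x + 1) y = f x y) (hpy : ∀ x y, f x (y + 1) = f x y) :
    ∃ C : ℝ, ∀ ε : ℝ, 0 < ε → ε ≤ 1 →
      |(∫ x in (0:ℝ)..1, f x (x / ε)) - ∫ x in (0:ℝ)..1, ∫ y in (0:ℝ)..1, f x y| ≤ C * ε := by
  have hc : Continuous (uncurry f) := hf.continuous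
  set F : ℝ → ℝ := fun x => ∫ y in (0:ℝ)..1, f x y with hF
  have hFc : Continuous F := osc_cont hc
  -- global bound M
  have hK : IsCompact (Set.Icc (0:ℝ) 1 ×ˢ Set.Icc (0:ℝ) 1) :=
    isCompact_Icc.prod isCompact_Icc
  obtain ⟨M, hM⟩ := hK.exists_bound_of_continuousOn hc.continuousOn
  have hMf : ∀ x y, |f x y| ≤ M := by
    intro x y
    rw [osc_red hpx hpy]
    have hmem : (Int.fract x, Int.fract y) ∈ Set.Icc (0:ℝ) 1 ×ˢ Set.Icc (0:ℝ) 1 := by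
      constructor <;> exact ⟨Int.fract_nonneg _, (Int.fract_lt_one _).le⟩
    simpa using hM _ hmem
  have hM0 : 0 ≤ M := le_trans (abs_nonneg _) (hMf 0 0)
  -- Lipschitz constant in the first variable
  obtain ⟨C₁, hC₁⟩ := hK.exists_bound_of_continuousOn
    ((hf.continuous_fderiv (by simp)).norm.continuousOn)
  have hC₁0 : 0 ≤ C₁ := le_trans (norm_nonneg _)
    (by simpa using hC₁ ((0:ℝ), (0:ℝ)) (by constructor <;> exact ⟨le_rfl, zero_le_one⟩))
  have hlip : ∀ y : ℝ, ∀ x ∈ Set.Icc (0:ℝ) 1, ∀ x' ∈ Set.Icc (0:ℝ) 1,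
      |f x y - f x' y| ≤ C₁ * |x - x'| := by
    intro y x hx x' hx'
    have hred : ∀ z, f z y = f z (Int.fract y) := by
      intro z
      have h1 : Periodic (f z) 1 := fun t => hpy z t
      have := h1.sub_int_mul_eq (x := y) ⌊y⌋
      rw [mul_one, Int.self_sub_floor] at this
      exact this.symm
    rw [hred x, hred x']
    have hyy : Int.fract y ∈ Set.Icc (0:ℝ) 1 := ⟨Int.fract_nonneg _, (Int.fract_lt_one _).le⟩
    have := ((convex_Icc (0:ℝ) 1).prod (convex_Icc (0:ℝ) 1)).norm_image_sub_le_of_norm_fderiv_le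
      (f := uncurry f) (C := C₁)
      (fun p _ => hf.differentiable (by simp) p)
      (fun p hp => by simpa using hC₁ p hp)
      (Set.mk_mem_prod hx' hyy) (Set.mk_mem_prod hx hyy)
    have hnorm : ‖((x, Int.fract y) : ℝ × ℝ) - (x', Int.fract y)‖ = |x - x'| := by
      simp [Prod.norm_def, Real.norm_eq_abs]
    rw [hnorm] at this
    simpa [Real.norm_eq_abs] using this
  have hFlip : ∀ x ∈ Set.Icc (0:ℝ) 1, ∀ x' ∈ Set.Icc (0:ℝ) 1,
      |F x - F x'| ≤ C₁ * |x - x'| := by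
    intro x hx x' hx'
    have hsub : F x - F x' = ∫ y in (0:ℝ)..1, (f x y - f x' y) := by
      rw [intervalIntegral.integral_sub ((hc.uncurry_left x).intervalIntegrable 0 1)
        ((hc.uncurry_left x').intervalIntegrable 0 1)]
    rw [hsub]
    have := intervalIntegral.norm_integral_le_of_norm_le_const
      (C := C₁ * |x - x'|) (f := fun y => f x y - f x' y) (a := 0) (b := 1)
      (fun y _ => by simpa [Real.norm_eq_abs] using hlip y x hx x' hx')
    simpa [Real.norm_eq_abs] using this
  have hMF : ∀ x, |F x| ≤ M := by
    intro x
    have := intervalIntegral.norm_integral_le_of_norm_le_const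
      (C := M) (f := fun y => f x y) (a := 0) (b := 1)
      (fun y _ => by simpa [Real.norm_eq_abs] using hMf x y)
    simpa [Real.norm_eq_abs] using this
  refine ⟨2 * C₁ + 2 * M, ?_⟩
  intro ε hε hε1
  have hεne : ε ≠ 0 := ne_of_gt hε
  set N : ℕ := ⌊1/ε⌋₊ with hNdef
  have hNle : (N : ℝ) * ε ≤ 1 := by
    have h1 : (N : ℝ) ≤ 1 / ε := Nat.floor_le (by positivity)
    calc (N:ℝ) * ε ≤ (1/ε) * ε := mul_le_mul_of_nonneg_right h1 hε.le
    _ = 1 := by field_simp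
  have hNgt : 1 - (N : ℝ) * ε ≤ ε := by
    have h2 : 1 / ε < (N : ℝ) + 1 := Nat.lt_floor_add_one _
    rw [div_lt_iff₀ hε] at h2
    nlinarith
  set a : ℕ → ℝ := fun k => (k:ℝ) * ε with ha
  have ha0 : a 0 = 0 := by simp [ha]
  have hak : ∀ k : ℕ, a (k+1) = a k + ε := by
    intro k; simp only [ha]; push_cast; ring
  have hamem : ∀ k : ℕ, k ≤ N → a k ∈ Set.Icc (0:ℝ) 1 := by
    intro k hk
    refine ⟨by positivity, ?_⟩
    calc a k ≤ (N:ℝ) * ε := mul_le_mul_of_nonneg_right (Nat.cast_le.mpr hk) hε.le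
    _ ≤ 1 := hNle
  set g : ℝ → ℝ := fun x => f x (x / ε) with hg
  have hgc : Continuous g := hc.comp (continuous_id.prodMk (continuous_id.div_const ε))
  have hsplit : ∀ h : ℝ → ℝ, Continuous h →
      ∫ x in (0:ℝ)..1, h x =
        (∑ k ∈ Finset.range N, ∫ x in a k..a (k+1), h x) + ∫ x in a N..1, h x := by
    intro h hh
    rw [intervalIntegral.sum_integral_adjacent_intervals
      (fun k _ => hh.intervalIntegrable _ _), ha0,
      intervalIntegral.integral_add_adjacent_intervals
        (hh.intervalIntegrable _ _) (hh.intervalIntegrable _ _)]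
  have key : ∀ k : ℕ, k < N →
      |(∫ x in a k..a (k+1), g x) - ∫ x in a k..a (k+1), F x| ≤ 2*C₁*ε*ε := by
    intro k hk
    have hk1 : k + 1 ≤ N := hk
    have hmemk : a k ∈ Set.Icc (0:ℝ) 1 := hamem k hk.le
    have hmemk1 : a (k+1) ∈ Set.Icc (0:ℝ) 1 := hamem (k+1) hk1
    have hmemx : ∀ x ∈ Set.uIoc (a k) (a (k+1)), x ∈ Set.Icc (0:ℝ) 1 ∧ |x - a k| ≤ ε := by
      intro x hx
      rw [Set.uIoc_of_le (by rw [hak]; linarith)] at hx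
      rw [hak k] at hx
      have h1k : a k + ε ≤ 1 := by rw [← hak k]; exact hmemk1.2
      refine ⟨⟨le_trans hmemk.1 hx.1.le, le_trans hx.2 h1k⟩, ?_⟩
      rw [abs_le]; constructor <;> linarith [hx.1, hx.2]
    have hmid : (∫ x in a k..a (k+1), f (a k) (x/ε)) = ε * F (a k) := by
      rw [intervalIntegral.integral_comp_div (f := fun y => f (a k) y) hεne]
      have h1 : a k / ε = (k:ℝ) := by rw [ha]; field_simp
      have h2 : a (k+1) / ε = (k:ℝ) + 1 := by rw [ha]; push_cast; field_simp
      rw [h1, h2]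
      have hper : Periodic (f (a k)) 1 := fun t => hpy _ t
      have hsh := hper.intervalIntegral_add_eq (k:ℝ) 0
      rw [zero_add] at hsh
      rw [hsh]
      simp [hF, smul_eq_mul]
    have hfak : Continuous fun x => f (a k) (x/ε) :=
      (hc.uncurry_left _).comp (continuous_id.div_const ε)
    have e1 : |(∫ x in a k..a (k+1), g x) - ε * F (a k)| ≤ C₁ * ε * ε := by
      rw [← hmid, ← intervalIntegral.integral_sub (hgc.intervalIntegrable _ _)
        (hfak.intervalIntegrable _ _)]
      have hb := intervalIntegral.norm_integral_le_of_norm_le_const (C := C₁ * ε)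
        (f := fun x => g x - f (a k) (x/ε)) (a := a k) (b := a (k+1))
        (fun x hx => by
          obtain ⟨hx1, hx2⟩ := hmemx x hx
          have h3 := hlip (x/ε) x hx1 (a k) hmemk
          have h4 : C₁ * |x - a k| ≤ C₁ * ε := mul_le_mul_of_nonneg_left hx2 hC₁0
          simpa [hg, Real.norm_eq_abs] using le_trans h3 h4)
      have habs : C₁ * ε * |a (k+1) - a k| = C₁ * ε * ε := by
        rw [hak k]; simp [abs_of_pos hε]
      rw [Real.norm_eq_abs, habs] at hb
      exact hb
    have e2 : |ε * F (a k) - ∫ x in a k..a (k+1), F x| ≤ C₁ * ε * ε := by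
      have hconst : (∫ x in a k..a (k+1), F (a k)) = ε * F (a k) := by
        rw [intervalIntegral.integral_const, hak k, smul_eq_mul]; ring
      rw [← hconst, ← intervalIntegral.integral_sub intervalIntegrable_const
        (hFc.intervalIntegrable _ _)]
      have hb := intervalIntegral.norm_integral_le_of_norm_le_const (C := C₁ * ε)
        (f := fun x => F (a k) - F x) (a := a k) (b := a (k+1))
        (fun x hx => by
          obtain ⟨hx1, hx2⟩ := hmemx x hx
          have h3 := hFlip (a k) hmemk x hx1
          have h4 : C₁ * |a k - x| ≤ C₁ * ε := by
            rw [abs_sub_comm]; exact mul_le_mul_of_nonneg_left hx2 hC₁0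
          simpa [Real.norm_eq_abs] using le_trans h3 h4)
      have habs : C₁ * ε * |a (k+1) - a k| = C₁ * ε * ε := by
        rw [hak k]; simp [abs_of_pos hε]
      rw [Real.norm_eq_abs, habs] at hb
      exact hb
    calc |(∫ x in a k..a (k+1), g x) - ∫ x in a k..a (k+1), F x|
        = |((∫ x in a k..a (k+1), g x) - ε * F (a k)) +
            (ε * F (a k) - ∫ x in a k..a (k+1), F x)| := by ring_nf
      _ ≤ |(∫ x in a k..a (k+1), g x) - ε * F (a k)| +
            |ε * F (a k) - ∫ x in a k..a (k+1), F x| := abs_add_le _ _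
      _ ≤ C₁ * ε * ε + C₁ * ε * ε := add_le_add e1 e2
      _ = 2*C₁*ε*ε := by ring
  have hsum : |(∑ k ∈ Finset.range N, ∫ x in a k..a (k+1), g x) -
      (∑ k ∈ Finset.range N, ∫ x in a k..a (k+1), F x)| ≤ 2*C₁*ε := by
    rw [← Finset.sum_sub_distrib]
    calc |∑ k ∈ Finset.range N,
          ((∫ x in a k..a (k+1), g x) - ∫ x in a k..a (k+1), F x)|
        ≤ ∑ k ∈ Finset.range N,
          |(∫ x in a k..a (k+1), g x) - ∫ x in a k..a (k+1), F x| :=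
          Finset.abs_sum_le_sum_abs _ _
      _ ≤ ∑ _k ∈ Finset.range N, 2*C₁*ε*ε :=
          Finset.sum_le_sum (fun k hk => key k (Finset.mem_range.mp hk))
      _ = (N:ℝ) * (2*C₁*ε*ε) := by rw [Finset.sum_const, Finset.card_range]; ring
      _ = (2*C₁*ε) * ((N:ℝ)*ε) := by ring
      _ ≤ (2*C₁*ε) * 1 := mul_le_mul_of_nonneg_left hNle (by positivity)
      _ = 2*C₁*ε := mul_one _
  have htail : ∀ h : ℝ → ℝ, (∀ x, |h x| ≤ M) → |∫ x in a N..1, h x| ≤ M * ε := by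
    intro h hh
    have hb := intervalIntegral.norm_integral_le_of_norm_le_const (C := M)
      (f := h) (a := a N) (b := 1) (fun x _ => by simpa [Real.norm_eq_abs] using hh x)
    rw [Real.norm_eq_abs] at hb
    have h1N : 0 ≤ 1 - a N := by
      have := (hamem N le_rfl).2; simp only [ha] at this ⊢; linarith
    have : |1 - a N| ≤ ε := by rw [abs_of_nonneg h1N]; simpa [ha] using hNgt
    calc |∫ x in a N..1, h x| ≤ M * |1 - a N| := hb
    _ ≤ M * ε := mul_le_mul_of_nonneg_left this hM0
  have hMg : ∀ x, |g x| ≤ M := fun x => hMf x (x/ε)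
  rw [hsplit g hgc, hsplit F hFc]
  have hdecomp : ((∑ k ∈ Finset.range N, ∫ x in a k..a (k+1), g x) + ∫ x in a N..1, g x) -
      ((∑ k ∈ Finset.range N, ∫ x in a k..a (k+1), F x) + ∫ x in a N..1, F x)
      = ((∑ k ∈ Finset.range N, ∫ x in a k..a (k+1), g x) -
         (∑ k ∈ Finset.range N, ∫ x in a k..a (k+1), F x)) +
        (∫ x in a N..1, g x) + (-(∫ x in a N..1, F x)) := by ring
  rw [hdecomp]
  calc |_ + _ + _| ≤ |_ + _| + |(-(∫ x in a N..1, F x))| := abs_add_le _ _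
    _ ≤ |(∑ k ∈ Finset.range N, ∫ x in a k..a (k+1), g x) -
         (∑ k ∈ Finset.range N, ∫ x in a k..a (k+1), F x)| +
        |∫ x in a N..1, g x| + |(-(∫ x in a N..1, F x))| :=
          add_le_add (abs_add_le _ _) le_rfl
    _ ≤ 2*C₁*ε + M * ε + M * ε := by
        rw [abs_neg]
        exact add_le_add (add_le_add hsum (htail g hMg)) (htail F hMF)
    _ = (2 * C₁ + 2 * M) * ε := by ring

lemma osc_tendsto (hf : ContDiff ℝ (⊤ : ℕ∞) (uncurry f))
    (hpx : ∀ x y, f (x + 1) y = f x y) (hpy : ∀ x y, f x (y + 1) = f x y)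
    {ε : ℕ → ℝ} (hεpos : ∀ n, 0 < ε n) (hε0 : Tendsto ε atTop (𝓝 0)) :
    Tendsto (fun n => ∫ x in (0:ℝ)..1, f x (x / ε n)) atTop
      (𝓝 (∫ x in (0:ℝ)..1, ∫ y in (0:ℝ)..1, f x y)) := by
  obtain ⟨C, hC⟩ := osc_key hf hpx hpy
  rw [tendsto_iff_dist_tendsto_zero]
  have h1 : ∀ᶠ n in atTop, ε n ≤ 1 :=
    (hε0.eventually (gt_mem_nhds one_pos)).mono fun n h => h.le
  refine squeeze_zero' (g := fun n => C * ε n)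
    (Eventually.of_forall fun n => dist_nonneg) (h1.mono fun n hn => ?_) ?_
  · rw [Real.dist_eq]; exact hC (ε n) (hεpos n) hn
  · simpa using hε0.const_mul C

lemma osc_pos (hc : Continuous (uncurry f)) (hfpos : ∀ x y, 0 < f x y) :
    0 < ∫ x in (0:ℝ)..1, ∫ y in (0:ℝ)..1, f x y := by
  refine intervalIntegral.intervalIntegral_pos_of_pos
    ((osc_cont hc).intervalIntegrable 0 1) (fun x => ?_) one_pos
  exact intervalIntegral.intervalIntegral_pos_of_pos
    ((hc.uncurry_left x).intervalIntegrable 0 1) (fun y => hfpos x y) one_pos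

end osc

lemma solves1D_explicit {V : ℝ → ℝ → ℝ} {ε : ℝ} {u m : ℝ → ℝ} {H : ℝ}
    (h : Solves1D V 0 ε u m H) :
    (∀ x, u x = 0) ∧ (∀ x, deriv u x = 0) ∧
    (∀ x, m x = Real.exp (V x (x / ε) - H)) ∧
    (∫ x in (0:ℝ)..1, Real.exp (V x (x / ε))) = Real.exp H := by
  obtain ⟨hu, hup, hm, hmp, hmpos, hHJ, hdiv, hu0, hm1⟩ := h
  have hud : Differentiable ℝ u := hu.differentiable (by simp)
  have hu2 : ContDiff ℝ (1 + 1) u := hu.of_le (by exact WithTop.coe_le_coe.mpr le_top)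
  have hu' : ContDiff ℝ 1 (deriv u) := (contDiff_succ_iff_deriv.mp hu2).2.2
  have hu'd : Differentiable ℝ (deriv u) := hu'.differentiable (by simp)
  have hu'c : Continuous (deriv u) := hu'.continuous
  have hw : Differentiable ℝ (fun z => m z * (0 + deriv u z)) :=
    (hm.differentiable (by simp)).mul ((differentiable_const 0).add hu'd)
  set c : ℝ := m 0 * (0 + deriv u 0) with hc
  have hconst : ∀ x, m x * deriv u x = c := by
    intro x
    have h0 := is_const_of_deriv_eq_zero hw hdiv x 0
    simp only [zero_add] at h0
    rw [h0, hc, zero_add]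
  have hderiv_eq : ∀ x, deriv u x = c / m x := by
    intro x
    rw [eq_div_iff (hmpos x).ne']
    rw [mul_comm]; exact hconst x
  have hint : (∫ x in (0:ℝ)..1, deriv u x) = 0 := by
    rw [intervalIntegral.integral_deriv_eq_sub (fun x _ => hud x)
      (hu'c.intervalIntegrable 0 1)]
    have : u 1 = u 0 := by simpa using hup 0
    rw [this, sub_self]
  have hcz : c = 0 := by
    by_contra hc0
    rcases lt_or_gt_of_ne hc0 with hneg | hpos
    · have hposint : 0 < ∫ x in (0:ℝ)..1, -deriv u x :=
        intervalIntegral.intervalIntegral_pos_of_pos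
          ((hu'c.neg).intervalIntegrable 0 1)
          (fun x => by
            rw [hderiv_eq x]
            exact neg_pos.mpr (div_neg_of_neg_of_pos hneg (hmpos x))) one_pos
      rw [intervalIntegral.integral_neg, hint, neg_zero] at hposint
      exact lt_irrefl 0 hposint
    · have hposint : 0 < ∫ x in (0:ℝ)..1, deriv u x :=
        intervalIntegral.intervalIntegral_pos_of_pos
          (hu'c.intervalIntegrable 0 1)
          (fun x => by rw [hderiv_eq x]; exact div_pos hpos (hmpos x)) one_pos
      rw [hint] at hposint
      exact lt_irrefl 0 hposint
  have hderiv0 : ∀ x, deriv u x = 0 := fun x => by rw [hderiv_eq x, hcz, zero_div]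
  have huconst : ∀ x, u x = u 0 := fun x => is_const_of_deriv_eq_zero hud hderiv0 x 0
  have hu00 : u 0 = 0 := by
    have h2 : (∫ x in (0:ℝ)..1, u x) = ∫ _x in (0:ℝ)..1, u 0 :=
      intervalIntegral.integral_congr fun x _ => huconst x
    rw [hu0] at h2
    simpa using h2.symm
  have hufin : ∀ x, u x = 0 := fun x => by rw [huconst x, hu00]
  have hmx : ∀ x, m x = Real.exp (V x (x / ε) - H) := by
    intro x
    have h3 := hHJ x
    rw [hderiv0 x] at h3
    have h4 : Real.log (m x) = V x (x / ε) - H := by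
      norm_num at h3; linarith
    rw [← h4, Real.exp_log (hmpos x)]
  have hH : (∫ x in (0:ℝ)..1, Real.exp (V x (x / ε))) = Real.exp H := by
    have h5 : (∫ x in (0:ℝ)..1, m x) =
        ∫ x in (0:ℝ)..1, Real.exp (V x (x / ε)) * Real.exp (-H) := by
      refine intervalIntegral.integral_congr fun x _ => ?_
      rw [hmx x, Real.exp_sub, Real.exp_neg, div_eq_mul_inv]
    rw [hm1, intervalIntegral.integral_mul_const] at h5
    have he : Real.exp (-H) ≠ 0 := Real.exp_ne_zero _
    field_simp [Real.exp_neg] at h5 ⊢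
    rw [Real.exp_neg, eq_mul_inv_iff_mul_eq₀ (Real.exp_ne_zero H)] at h5
    linarith
  exact ⟨hufin, hderiv0, hmx, hH⟩

/-- for `d = 1` and `P = 0`, the solutions of the oscillating MFG system are
explicit: `u_ε = 0`, `m_ε = e^{V(x,x/ε) - H̄_ε(0)}`, `H̄_ε(0) = ln ∫_0^1 e^{V(x,x/ε)}dx`,
`j_ε = m_ε u_ε' = 0`; moreover `H̄_ε(0) → ln ∫_0^1∫_0^1 e^V` and `m_ε` strongly two-scale
converges in every `L^p`, `p ∈ (1,∞)`, to `m(x,y) = e^{V(x,y) - H̄(0)}`. -/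
theorem stmt6 (V : ℝ → ℝ → ℝ) (hV : SmoothV1 V)
    (ε : ℕ → ℝ) (hεpos : ∀ n, 0 < ε n) (hε0 : Tendsto ε atTop (𝓝 0))
    (u m : ℕ → ℝ → ℝ) (H : ℕ → ℝ)
    (hsol : ∀ n, Solves1D V 0 (ε n) (u n) (m n) (H n)) :
    (∀ n x, u n x = 0) ∧
    (∀ n x, m n x = Real.exp (V x (x / ε n) - H n)) ∧
    (∀ n, H n = Real.log (∫ x in (0:ℝ)..1, Real.exp (V x (x / ε n)))) ∧
    (∀ n x, m n x * deriv (u n) x = 0) ∧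
    Tendsto H atTop
      (𝓝 (Real.log (∫ x in (0:ℝ)..1, ∫ y in (0:ℝ)..1, Real.exp (V x y)))) ∧
    (∀ p : ℝ, 1 < p →
      TwoScaleS1 ε p (fun n => m n)
        (fun x y => Real.exp (V x y -
          Real.log (∫ x' in (0:ℝ)..1, ∫ y' in (0:ℝ)..1, Real.exp (V x' y'))))) := by
  obtain ⟨hVs, hVpx, hVpy⟩ := hV
  have hex := fun n => solves1D_explicit (hsol n)
  set I : ℝ := ∫ x in (0:ℝ)..1, ∫ y in (0:ℝ)..1, Real.exp (V x y) with hIdef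
  have hexpV : ContDiff ℝ (⊤ : ℕ∞) (uncurry fun x y => Real.exp (V x y)) :=
    Real.contDiff_exp.comp hVs
  have hIn : Tendsto (fun n => ∫ x in (0:ℝ)..1, Real.exp (V x (x / ε n))) atTop (𝓝 I) :=
    osc_tendsto hexpV (fun x y => by rw [hVpx x y]) (fun x y => by rw [hVpy x y]) hεpos hε0
  have hIpos : 0 < I :=
    osc_pos hexpV.continuous (fun x y => Real.exp_pos _)
  have hHn : ∀ n, H n = Real.log (∫ x in (0:ℝ)..1, Real.exp (V x (x / ε n))) := by
    intro n
    rw [(hex n).2.2.2, Real.log_exp]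
  have hHtend : Tendsto H atTop (𝓝 (Real.log I)) := by
    have h2 := ((Real.continuousAt_log hIpos.ne').tendsto).comp hIn
    exact h2.congr fun n => (hHn n).symm
  refine ⟨fun n x => (hex n).1 x, fun n x => (hex n).2.2.1 x, hHn,
    fun n x => by rw [(hex n).2.1 x, mul_zero], hHtend, ?_⟩
  intro p hp
  refine ⟨?_, ?_⟩
  · -- weak two-scale convergence
    intro ψ hψ hψx hψy
    beta_reduce
    have hgs : ContDiff ℝ (⊤ : ℕ∞) (uncurry fun x y => Real.exp (V x y) * ψ x y) :=
      (Real.contDiff_exp.comp hVs).mul hψ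
    have hgt := osc_tendsto hgs
      (fun x y => by simp only [hVpx x y, hψx x y])
      (fun x y => by simp only [hVpy x y, hψy x y]) hεpos hε0
    have het : Tendsto (fun n => Real.exp (-H n)) atTop (𝓝 (Real.exp (-Real.log I))) :=
      (Real.continuous_exp.tendsto _).comp hHtend.neg
    have hmain := het.mul hgt
    have hRHS : (∫ x in (0:ℝ)..1, ∫ y in (0:ℝ)..1, Real.exp (V x y - Real.log I) * ψ x y)
        = Real.exp (-Real.log I) *
          ∫ x in (0:ℝ)..1, ∫ y in (0:ℝ)..1, Real.exp (V x y) * ψ x y := by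
      rw [← intervalIntegral.integral_const_mul]
      refine intervalIntegral.integral_congr fun x _ => ?_
      rw [← intervalIntegral.integral_const_mul]
      refine intervalIntegral.integral_congr fun y _ => ?_
      rw [Real.exp_sub, Real.exp_neg]
      ring
    rw [hRHS]
    refine hmain.congr fun n => ?_
    rw [← intervalIntegral.integral_const_mul]
    refine (intervalIntegral.integral_congr fun x _ => ?_).symm
    rw [(hex n).2.2.1 x, Real.exp_sub, Real.exp_neg]
    ring
  · -- convergence of norms
    beta_reduce
    have hg2 : ContDiff ℝ (⊤ : ℕ∞) (uncurry fun x y => Real.exp (V x y * p)) :=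
      Real.contDiff_exp.comp (hVs.mul contDiff_const)
    have hg2t := osc_tendsto hg2
      (fun x y => by rw [hVpx x y]) (fun x y => by rw [hVpy x y]) hεpos hε0
    set J : ℝ := ∫ x in (0:ℝ)..1, ∫ y in (0:ℝ)..1, Real.exp (V x y * p) with hJdef
    have hJpos : 0 < J := osc_pos hg2.continuous (fun x y => Real.exp_pos _)
    have he2 : Tendsto (fun n => Real.exp (-H n * p)) atTop
        (𝓝 (Real.exp (-Real.log I * p))) :=
      (Real.continuous_exp.tendsto _).comp (hHtend.neg.mul_const p)
    have hpt : ∀ n x, |m n x| ^ p = Real.exp (-H n * p) * Real.exp (V x (x / ε n) * p) := by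
      intro n x
      rw [(hex n).2.2.1 x, abs_of_pos (Real.exp_pos _),
        Real.rpow_def_of_pos (Real.exp_pos _), Real.log_exp, ← Real.exp_add]
      congr 1
      ring
    have hL : Tendsto (fun n => ∫ x in (0:ℝ)..1, |m n x| ^ p) atTop
        (𝓝 (Real.exp (-Real.log I * p) * J)) := by
      refine (he2.mul hg2t).congr fun n => ?_
      rw [← intervalIntegral.integral_const_mul]
      exact (intervalIntegral.integral_congr fun x _ => hpt n x).symm
    have hRHS2 : (∫ x in (0:ℝ)..1, ∫ y in (0:ℝ)..1, |Real.exp (V x y - Real.log I)| ^ p)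
        = Real.exp (-Real.log I * p) * J := by
      rw [hJdef, ← intervalIntegral.integral_const_mul]
      refine intervalIntegral.integral_congr fun x _ => ?_
      rw [← intervalIntegral.integral_const_mul]
      refine intervalIntegral.integral_congr fun y _ => ?_
      rw [abs_of_pos (Real.exp_pos _), Real.rpow_def_of_pos (Real.exp_pos _),
        Real.log_exp, ← Real.exp_add]
      congr 1
      ring
    rw [hRHS2]
    have hLpos : 0 < Real.exp (-Real.log I * p) * J := by positivity
    have hcont : ContinuousAt (fun t : ℝ => t ^ (1 / p)) (Real.exp (-Real.log I * p) * J) :=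
      Real.continuousAt_rpow_const _ _ (Or.inl hLpos.ne')
    exact hcont.tendsto.comp hL
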